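/- arXiv:1704.04449 — 4 statements merged into one kernel-verified Lean document; each statement's English description precedes it below -/
import Mathlib

section
/- Let R be a principal ideal domain and V a finitely generated free R-module. If submodules A and B of V are both direct summands of V, then A ∩ B is a direct summand of V. -/
/-!
Quotients by direct summands of a free module are torsion-free, and `V ⧸ (A ⊓ B)` embeds into
`V ⧸ A × V ⧸ B`, so it is torsion-free as well. Over a PID a finitely generated torsion-free
module is free, hence projective, so the projection `V → V ⧸ (A ⊓ B)` splits and the image of
a section is a complement of `A ⊓ B`.
-/

namespace Submodule

variable {R M : Type*} [Ring R] [AddCommGroup M] [Module R M]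

theorem isTorsionFree_quotient_of_isCompl [Module.IsTorsionFree R M] {p q : Submodule R M}
    (h : IsCompl p q) : Module.IsTorsionFree R (M ⧸ p) :=
  (p.quotientEquivOfIsCompl q h).injective.moduleIsTorsionFree _ (map_smul _)

theorem isTorsionFree_quotient_inf (p q : Submodule R M) [Module.IsTorsionFree R (M ⧸ p)]
    [Module.IsTorsionFree R (M ⧸ q)] : Module.IsTorsionFree R (M ⧸ (p ⊓ q)) := by
  have hker : LinearMap.ker (p.mkQ.prod q.mkQ) = p ⊓ q := by
    rw [LinearMap.ker_prod, ker_mkQ, ker_mkQ]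
  exact (LinearMap.ker_eq_bot.1 ((p ⊓ q).ker_liftQ_eq_bot' _ hker.symm)).moduleIsTorsionFree _
    (map_smul _)

theorem exists_isCompl_of_projective_quotient (p : Submodule R M)
    [Module.Projective R (M ⧸ p)] : ∃ q : Submodule R M, IsCompl p q := by
  obtain ⟨s, hs⟩ := Module.projective_lifting_property p.mkQ LinearMap.id p.mkQ_surjective
  have hidem : IsIdempotentElem (s ∘ₗ p.mkQ) :=
    LinearMap.ext fun x => congrArg s (LinearMap.congr_fun hs (p.mkQ x))
  have hker : LinearMap.ker (s ∘ₗ p.mkQ) = p := by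
    rw [LinearMap.ker_comp_of_ker_eq_bot _ (LinearMap.ker_eq_bot_of_inverse hs), ker_mkQ]
  have hcompl := (LinearMap.IsIdempotentElem.isCompl hidem).symm
  rw [hker] at hcompl
  exact ⟨_, hcompl⟩

end Submodule

open Submodule in
/-- Over a PID `R`, if submodules `A` and `B` of a finitely
generated free module `V` are both direct summands of `V`, then so is `A ⊓ B`. -/
theorem inf_of_direct_summands_is_direct_summand
    {R : Type*} [CommRing R] [IsDomain R] [IsPrincipalIdealRing R]
    {V : Type*} [AddCommGroup V] [Module R V] [Module.Free R V] [Module.Finite R V]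
    (A B : Submodule R V)
    (hA : ∃ C : Submodule R V, A ⊓ C = ⊥ ∧ A ⊔ C = ⊤)
    (hB : ∃ C : Submodule R V, B ⊓ C = ⊥ ∧ B ⊔ C = ⊤) :
    ∃ C : Submodule R V, (A ⊓ B) ⊓ C = ⊥ ∧ (A ⊓ B) ⊔ C = ⊤ := by
  obtain ⟨C, hAC, hAC'⟩ := hA
  obtain ⟨D, hBD, hBD'⟩ := hB
  have := isTorsionFree_quotient_of_isCompl ⟨disjoint_iff.2 hAC, codisjoint_iff.2 hAC'⟩
  have := isTorsionFree_quotient_of_isCompl ⟨disjoint_iff.2 hBD, codisjoint_iff.2 hBD'⟩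
  have := isTorsionFree_quotient_inf A B
  -- `V ⧸ (A ⊓ B)` is projective by `Module.free_of_finite_type_torsion_free'`.
  obtain ⟨E, hE⟩ := exists_isCompl_of_projective_quotient (A ⊓ B)
  exact ⟨E, hE.inf_eq_bot, hE.sup_eq_top⟩
end

section
/- Let R be a principal ideal domain, V a finitely generated free R-module, and A, B submodules of V with B a direct summand of V. Then A has a complement in V containing B (i.e., there exists a submodule E with B ⊆ E, A ∩ E = 0 and A + E = V) if and only if there exists a submodule D with V = A ⊕ B ⊕ D (i.e., the sum A + B + D equals V and is an internal direct sum). -/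
/-! By modularity of the submodule lattice: if `C` complements `B` and `E ⊇ B` complements `A`,
then `D = C ⊓ E` complements `A ⊔ B`; conversely, if `A ⊔ B ⊔ D` is direct, then `E = B ⊔ D`
complements `A`. -/

section ModularLattice

variable {α : Type*} [Lattice α] [BoundedOrder α] [IsModularLattice α]

theorem IsCompl.isCompl_sup_inf_of_le {a b c e : α} (hbc : IsCompl b c) (hae : IsCompl a e)
    (hbe : b ≤ e) : IsCompl (a ⊔ b) (c ⊓ e) := by
  have hmeet : (b ⊔ a) ⊓ e = b := by
    rw [sup_inf_assoc_of_le a hbe, hae.inf_eq_bot, sup_bot_eq]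
  have hjoin : b ⊔ c ⊓ e = e := by
    rw [← sup_inf_assoc_of_le c hbe, hbc.sup_eq_top, top_inf_eq]
  constructor
  · rw [disjoint_iff, inf_comm c, ← inf_assoc, sup_comm, hmeet, hbc.inf_eq_bot]
  · rw [codisjoint_iff, sup_assoc, hjoin, hae.sup_eq_top]

theorem exists_isCompl_ge_iff {a b c : α} (hbc : IsCompl b c) :
    (∃ e, b ≤ e ∧ IsCompl a e) ↔ ∃ d, Disjoint a b ∧ IsCompl (a ⊔ b) d := by
  constructor
  · rintro ⟨e, hbe, hae⟩
    exact ⟨c ⊓ e, hae.disjoint.mono_right hbe, hbc.isCompl_sup_inf_of_le hae hbe⟩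
  · rintro ⟨d, hab, habd⟩
    exact ⟨b ⊔ d, le_sup_left, hab.isCompl_sup_right_of_isCompl_sup_left habd⟩

end ModularLattice

theorem complement_containing_iff_direct_sum_general
    {R : Type*} [CommRing R]
    {V : Type*} [AddCommGroup V] [Module R V]
    (A B : Submodule R V)
    (hB : ∃ C : Submodule R V, B ⊓ C = ⊥ ∧ B ⊔ C = ⊤) :
    (∃ E : Submodule R V, B ≤ E ∧ A ⊓ E = ⊥ ∧ A ⊔ E = ⊤) ↔
      (∃ D : Submodule R V, A ⊓ B = ⊥ ∧ (A ⊔ B) ⊓ D = ⊥ ∧ A ⊔ B ⊔ D = ⊤) := by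
  obtain ⟨C, hBC, hBCtop⟩ := hB
  simpa only [isCompl_iff, disjoint_iff, codisjoint_iff] using
    exists_isCompl_ge_iff (a := A) ⟨disjoint_iff.2 hBC, codisjoint_iff.2 hBCtop⟩

/-- Over a PID `R`, let `A, B` be submodules of a finitely generated
free module `V` with `B` a direct summand of `V`. Then `A` has a complement in `V`
containing `B` if and only if there is a submodule `D` with `V = A ⊕ B ⊕ D`
(internal direct sum). -/
theorem complement_containing_iff_direct_sum
    {R : Type*} [CommRing R] [IsDomain R] [IsPrincipalIdealRing R]
    {V : Type*} [AddCommGroup V] [Module R V] [Module.Free R V] [Module.Finite R V]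
    (A B : Submodule R V)
    (hB : ∃ C : Submodule R V, B ⊓ C = ⊥ ∧ B ⊔ C = ⊤) :
    (∃ E : Submodule R V, B ≤ E ∧ A ⊓ E = ⊥ ∧ A ⊔ E = ⊤) ↔
      (∃ D : Submodule R V, A ⊓ B = ⊥ ∧ (A ⊔ B) ⊓ D = ⊥ ∧ A ⊔ B ⊔ D = ⊤) :=
  complement_containing_iff_direct_sum_general A B hB
end

section
/- Let R be a principal ideal domain and V a finitely generated free R-module. Let (v₀, C₀), …, (v_p, C_p) be pairs of an element vᵢ ∈ V and a submodule Cᵢ ⊆ V such that V = R·vᵢ ⊕ Cᵢ for each i (i.e., R·vᵢ ∩ Cᵢ = 0 and R·vᵢ + Cᵢ = V). Then the following are equivalent: (a) there exists a submodule C ⊆ V with V = span(v₀,…,v_p) ⊕ C and Cⱼ = span(vᵢ : i ≠ j) ⊕ C for every j; (b) vᵢ ∈ Cⱼ for all i ≠ j. -/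
/-!
Take `D := ⨅ j, Cⱼ` and work in the modular lattice of submodules, with `aᵢ := R ∙ vᵢ` and
`cᵢ := Cᵢ`: since `aᵢ ≤ cⱼ` for `i ≠ j`, adjoining one `aⱼ` at a time shows, by induction on a
finite set `S` of indices, that `⨆ i ∈ S, aᵢ` is disjoint from `D` and that
`⨅ k ∉ S, cₖ ≤ (⨆ i ∈ S, aᵢ) ⊔ D`.
-/

section ModularLattice

variable {α ι : Type*} [CompleteLattice α] [IsModularLattice α] {a c : ι → α}

theorem biSup_inf_iInf_eq_bot (hdisj : ∀ i, a i ⊓ c i = ⊥)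
    (hle : ∀ i j, i ≠ j → a i ≤ c j) {S : Set ι} (hS : S.Finite) :
    (⨆ i ∈ S, a i) ⊓ ⨅ k, c k = ⊥ := by
  induction S, hS using Set.Finite.induction_on with
  | empty => simp
  | @insert j S hjS _ ih =>
    have hSj : ⨆ i ∈ S, a i ≤ c j :=
      iSup₂_le fun i hi => hle i j (ne_of_mem_of_not_mem hi hjS)
    calc (⨆ i ∈ insert j S, a i) ⊓ ⨅ k, c k
        = ((⨆ i ∈ S, a i) ⊔ a j) ⊓ c j ⊓ ⨅ k, c k := by
          rw [iSup_insert, sup_comm, inf_assoc, inf_eq_right.2 (iInf_le c j)]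
      _ = (⨆ i ∈ S, a i) ⊓ ⨅ k, c k := by rw [sup_inf_assoc_of_le _ hSj, hdisj, sup_bot_eq]
      _ = ⊥ := ih

theorem biInf_notMem_le_biSup_sup_iInf (hcodisj : ∀ i, a i ⊔ c i = ⊤)
    (hle : ∀ i j, i ≠ j → a i ≤ c j) {S : Set ι} (hS : S.Finite) :
    ⨅ (k) (_ : k ∉ S), c k ≤ (⨆ i ∈ S, a i) ⊔ ⨅ k, c k := by
  induction S, hS using Set.Finite.induction_on with
  | empty => simp
  | @insert j S _ _ ih =>
    set E := ⨅ (k) (_ : k ∉ insert j S), c k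
    have hjE : a j ≤ E := le_iInf₂ fun k hk => hle j k (Ne.symm fun h => hk (h ▸ S.mem_insert j))
    have hcE : c j ⊓ E ≤ ⨅ (k) (_ : k ∉ S), c k := by
      refine le_iInf₂ fun k hk => ?_
      by_cases hkj : k = j
      · exact hkj ▸ inf_le_left
      · exact inf_le_right.trans (iInf₂_le k (by simp [hkj, hk]))
    -- `E = (a j ⊔ c j) ⊓ E`, and the modular law moves `a j ≤ E` out of the meet.
    calc E = a j ⊔ c j ⊓ E := by rw [← sup_inf_assoc_of_le _ hjE, hcodisj, top_inf_eq]
      _ ≤ a j ⊔ ((⨆ i ∈ S, a i) ⊔ ⨅ k, c k) := sup_le_sup_left (hcE.trans ih) _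
      _ = (⨆ i ∈ insert j S, a i) ⊔ ⨅ k, c k := by rw [iSup_insert, sup_assoc]

end ModularLattice

theorem Submodule.span_image_eq_biSup {R V ι : Type*} [Semiring R] [AddCommMonoid V]
    [Module R V] (v : ι → V) (S : Set ι) : span R (v '' S) = ⨆ i ∈ S, R ∙ v i := by
  rw [span_eq_iSup_of_singleton_spans, iSup_image]

theorem spans_simplex_iff_mem_complements_general
    {R : Type*} [CommRing R]
    {V : Type*} [AddCommGroup V] [Module R V]
    (p : ℕ) (v : Fin (p + 1) → V) (C : Fin (p + 1) → Submodule R V)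
    (hcompl : ∀ i, Submodule.span R {v i} ⊓ C i = ⊥ ∧ Submodule.span R {v i} ⊔ C i = ⊤) :
    (∃ D : Submodule R V,
        (Submodule.span R (Set.range v) ⊓ D = ⊥ ∧
          Submodule.span R (Set.range v) ⊔ D = ⊤) ∧
        ∀ j, Submodule.span R (v '' {i | i ≠ j}) ⊓ D = ⊥ ∧
          Submodule.span R (v '' {i | i ≠ j}) ⊔ D = C j) ↔
      (∀ i j, i ≠ j → v i ∈ C j) := by
  constructor
  · rintro ⟨D, -, hD⟩ i j hij
    exact (hD j).2 ▸ Submodule.mem_sup_left (Submodule.subset_span ⟨i, hij, rfl⟩)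
  · intro hmem
    have hle : ∀ i j, i ≠ j → R ∙ v i ≤ C j := fun i j hij =>
      (Submodule.span_singleton_le_iff_mem _ _).2 (hmem i j hij)
    have hdisj (S : Set (Fin (p + 1))) := biSup_inf_iInf_eq_bot (fun i => (hcompl i).1) hle
      S.toFinite
    have hspan (S : Set (Fin (p + 1))) := biInf_notMem_le_biSup_sup_iInf
      (fun i => (hcompl i).2) hle S.toFinite
    simp only [← Set.image_univ, Submodule.span_image_eq_biSup]
    refine ⟨⨅ k, C k, ⟨hdisj _, eq_top_iff.2 (by simpa using hspan Set.univ)⟩, fun j =>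
      ⟨hdisj _, le_antisymm (sup_le (iSup₂_le fun i hij => hle i j hij) (iInf_le C j)) ?_⟩⟩
    simpa using hspan {i | i ≠ j}

/-- Over a PID `R`, let `V` be a finitely generated free module and
`(v₀, C₀), …, (v_p, C_p)` pairs with `V = R·vᵢ ⊕ Cᵢ` for each `i`. Then the following
are equivalent: (a) there is a submodule `C` with `V = span(v₀,…,v_p) ⊕ C` and
`Cⱼ = span(vᵢ : i ≠ j) ⊕ C` for every `j`; (b) `vᵢ ∈ Cⱼ` for all `i ≠ j`. -/
theorem spans_simplex_iff_mem_complements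
    {R : Type*} [CommRing R] [IsDomain R] [IsPrincipalIdealRing R]
    {V : Type*} [AddCommGroup V] [Module R V] [Module.Free R V] [Module.Finite R V]
    (p : ℕ) (v : Fin (p + 1) → V) (C : Fin (p + 1) → Submodule R V)
    (hcompl : ∀ i, Submodule.span R {v i} ⊓ C i = ⊥ ∧ Submodule.span R {v i} ⊔ C i = ⊤) :
    (∃ D : Submodule R V,
        (Submodule.span R (Set.range v) ⊓ D = ⊥ ∧
          Submodule.span R (Set.range v) ⊔ D = ⊤) ∧
        ∀ j, Submodule.span R (v '' {i | i ≠ j}) ⊓ D = ⊥ ∧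
          Submodule.span R (v '' {i | i ≠ j}) ⊔ D = C j) ↔
      (∀ i j, i ≠ j → v i ∈ C j) :=
  spans_simplex_iff_mem_complements_general p v C hcompl
end

section
/- Let R be a principal ideal domain and V a finitely generated free R-module. Suppose V = A ⊕ B for submodules A, B, and let U, W be submodules of V with U ⊆ A and B ⊆ W. Let P(V, U, W) denote the set of pairs (f, C) where f is an injective R-linear map from a finitely generated free R-module into V with image contained in U, and C is a submodule of V with W ⊆ C, im(f) ∩ C = 0 and im(f) + C = V. Let P(A, U, W ∩ A) denote the analogous set with ambient module A and constraining submodules U and W ∩ A. Then the assignment (f, C) ↦ (f, C ∩ A) defines a bijection from P(V, U, W) to P(A, U, W ∩ A), with inverse given by (g, D) ↦ (g, D + B) (this sum being direct). -/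
/-- The set of pairs `(f, C)` where `f : M →ₗ[R] V` is injective with image contained
in `U`, and `C` is a submodule of the ambient submodule `Amb` containing `W` with
`im(f) ∩ C = 0` and `im(f) + C = Amb`. Taking `Amb = ⊤` recovers the pairs used in
the semisimplicial set `PBC(V, U, W)`; a general `Amb` models the ambient module `A`
viewed inside `V`. -/
def PBCpairs (R : Type*) [CommRing R] {V : Type*} [AddCommGroup V] [Module R V]
    (Amb U W : Submodule R V) (M : Type*) [AddCommGroup M] [Module R M] :
    Set ((M →ₗ[R] V) × Submodule R V) :=
  {fc | Function.Injective fc.1 ∧ LinearMap.range fc.1 ≤ U ∧ fc.2 ≤ Amb ∧ W ≤ fc.2 ∧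
    LinearMap.range fc.1 ⊓ fc.2 = ⊥ ∧ LinearMap.range fc.1 ⊔ fc.2 = Amb}

/-!
Everything happens in the modular lattice of submodules of `V`. Since `A` and `B` are
complements, `C ↦ C ⊓ A` and `D ↦ D ⊔ B` are mutually inverse between submodules above `B`
and submodules below `A` (the diamond isomorphism). Because `im f ≤ U ≤ A`, the modular law
moves `im f` across these operations, so both the complement conditions and the constraint
`W ≤ C` are carried back and forth.
-/

namespace IsCompl

variable {α : Type*} [Lattice α] [BoundedOrder α] [IsModularLattice α] {a b : α}

theorem inf_sup_of_le (h : IsCompl a b) {c : α} (hbc : b ≤ c) : c ⊓ a ⊔ b = c := by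
  rw [inf_sup_assoc_of_le _ hbc, h.sup_eq_top, inf_top_eq]

theorem sup_inf_of_le (h : IsCompl a b) {d : α} (hda : d ≤ a) : (d ⊔ b) ⊓ a = d := by
  rw [sup_inf_assoc_of_le _ hda, inf_comm, h.inf_eq_bot, sup_bot_eq]

end IsCompl

namespace PBCpairs

variable {R : Type*} [CommRing R] {V : Type*} [AddCommGroup V] [Module R V]
  {A B U W : Submodule R V} {M : Type*} [AddCommGroup M] [Module R M]
  {fc : (M →ₗ[R] V) × Submodule R V}

theorem snd_le_amb {Amb : Submodule R V} (h : fc ∈ PBCpairs R Amb U W M) : fc.2 ≤ Amb :=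
  h.2.2.1

theorem le_snd {Amb : Submodule R V} (h : fc ∈ PBCpairs R Amb U W M) : W ≤ fc.2 :=
  h.2.2.2.1

theorem inf_mem (hUA : U ≤ A) (h : fc ∈ PBCpairs R ⊤ U W M) :
    (fc.1, fc.2 ⊓ A) ∈ PBCpairs R A U (W ⊓ A) M := by
  obtain ⟨hinj, hfU, -, hWC, hinf, hsup⟩ := h
  refine ⟨hinj, hfU, inf_le_right, inf_le_inf_right A hWC, ?_, ?_⟩
  · exact eq_bot_iff.mpr ((inf_le_inf_left _ inf_le_left).trans hinf.le)
  · rw [← sup_inf_assoc_of_le _ (hfU.trans hUA), hsup, top_inf_eq]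

theorem sup_mem (hAB : IsCompl A B) (hUA : U ≤ A) (hBW : B ≤ W)
    (h : fc ∈ PBCpairs R A U (W ⊓ A) M) : (fc.1, fc.2 ⊔ B) ∈ PBCpairs R ⊤ U W M := by
  obtain ⟨hinj, hfU, hDA, hWD, hinf, hsup⟩ := h
  have hfA := hfU.trans hUA
  refine ⟨hinj, hfU, le_top, ?_, ?_, ?_⟩
  · rw [← hAB.inf_sup_of_le hBW]
    exact sup_le_sup_right hWD B
  · -- `im f ≤ A`, so `im f` only meets the part `(D ⊔ B) ⊓ A = D` of `D ⊔ B`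
    refine eq_bot_iff.mpr (le_trans ?_ hinf.le)
    calc LinearMap.range fc.1 ⊓ (fc.2 ⊔ B)
        ≤ LinearMap.range fc.1 ⊓ ((fc.2 ⊔ B) ⊓ A) :=
          le_inf inf_le_left (le_inf inf_le_right (inf_le_left.trans hfA))
      _ = LinearMap.range fc.1 ⊓ fc.2 := by rw [hAB.sup_inf_of_le hDA]
  · rw [← sup_assoc, hsup, hAB.sup_eq_top]

end PBCpairs

theorem pbc_pairs_bijection_general
    {R : Type*} [CommRing R]
    {V : Type*} [AddCommGroup V] [Module R V]
    (A B U W : Submodule R V)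
    (hAB : A ⊓ B = ⊥) (hAB' : A ⊔ B = ⊤) (hUA : U ≤ A) (hBW : B ≤ W)
    (M : Type*) [AddCommGroup M] [Module R M] :
    Set.BijOn (fun fc : (M →ₗ[R] V) × Submodule R V => (fc.1, fc.2 ⊓ A))
        (PBCpairs R ⊤ U W M) (PBCpairs R A U (W ⊓ A) M) ∧
      (∀ gd ∈ PBCpairs R A U (W ⊓ A) M,
        gd.2 ⊓ B = ⊥ ∧ (gd.1, gd.2 ⊔ B) ∈ PBCpairs R ⊤ U W M ∧
          (gd.2 ⊔ B) ⊓ A = gd.2) ∧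
      (∀ fc ∈ PBCpairs R ⊤ U W M, (fc.2 ⊓ A) ⊔ B = fc.2) := by
  have hcompl : IsCompl A B := ⟨disjoint_iff.mpr hAB, codisjoint_iff.mpr hAB'⟩
  have inf_sup_cancel : ∀ fc ∈ PBCpairs R ⊤ U W M, (fc.2 ⊓ A) ⊔ B = fc.2 := fun fc h =>
    hcompl.inf_sup_of_le (hBW.trans (PBCpairs.le_snd h))
  have sup_inf_cancel : ∀ gd ∈ PBCpairs R A U (W ⊓ A) M, (gd.2 ⊔ B) ⊓ A = gd.2 := fun gd h =>
    hcompl.sup_inf_of_le (PBCpairs.snd_le_amb h)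
  have hinv : Set.InvOn (fun gd : (M →ₗ[R] V) × Submodule R V => (gd.1, gd.2 ⊔ B))
      (fun fc => (fc.1, fc.2 ⊓ A)) (PBCpairs R ⊤ U W M) (PBCpairs R A U (W ⊓ A) M) :=
    ⟨fun fc h => Prod.ext rfl (inf_sup_cancel fc h),
      fun gd h => Prod.ext rfl (sup_inf_cancel gd h)⟩
  refine ⟨hinv.bijOn (fun _ => PBCpairs.inf_mem hUA) (fun _ => PBCpairs.sup_mem hcompl hUA hBW),
    fun gd h => ⟨(hcompl.disjoint.mono_left (PBCpairs.snd_le_amb h)).eq_bot,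
      PBCpairs.sup_mem hcompl hUA hBW h, sup_inf_cancel gd h⟩, inf_sup_cancel⟩

/-- Over a PID `R`, suppose `V = A ⊕ B` and `U ⊆ A`, `B ⊆ W`. Then
`(f, C) ↦ (f, C ∩ A)` is a bijection from `PBC(V, U, W)` onto `PBC(A, U, W ∩ A)`,
with inverse `(g, D) ↦ (g, D + B)`, the latter sum being direct. -/
theorem pbc_pairs_bijection
    {R : Type*} [CommRing R] [IsDomain R] [IsPrincipalIdealRing R]
    {V : Type*} [AddCommGroup V] [Module R V] [Module.Free R V] [Module.Finite R V]
    (A B U W : Submodule R V)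
    (hAB : A ⊓ B = ⊥) (hAB' : A ⊔ B = ⊤) (hUA : U ≤ A) (hBW : B ≤ W)
    (M : Type*) [AddCommGroup M] [Module R M] [Module.Free R M] [Module.Finite R M] :
    Set.BijOn (fun fc : (M →ₗ[R] V) × Submodule R V => (fc.1, fc.2 ⊓ A))
        (PBCpairs R ⊤ U W M) (PBCpairs R A U (W ⊓ A) M) ∧
      (∀ gd ∈ PBCpairs R A U (W ⊓ A) M,
        gd.2 ⊓ B = ⊥ ∧ (gd.1, gd.2 ⊔ B) ∈ PBCpairs R ⊤ U W M ∧
          (gd.2 ⊔ B) ⊓ A = gd.2) ∧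
      (∀ fc ∈ PBCpairs R ⊤ U W M, (fc.2 ⊓ A) ⊔ B = fc.2) :=
  pbc_pairs_bijection_general A B U W hAB hAB' hUA hBW M
end
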